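/- arXiv:math/0509062 — 3 statements merged into one kernel-verified Lean document; each statement's English description precedes it below -/
import Mathlib

section
/- Let G be a finite simple graph, n ≥ 0, and x a vertex of G. Then the diagonal entry (Δ_G^n)(x,x) of the n-th power of the Laplacian depends only on the isomorphism class of the rooted ball of radius n around x; that is, if φ is a graph isomorphism from the ball B_n(x) in G onto the ball B_n(y) in a finite simple graph H with φ(x)=y, then (Δ_G^n)(x,x) = (Δ_H^n)(y,y). -/
open Matrix

section Aux

variable {V : Type*} [Fintype V] [DecidableEq V]

lemma lap_apply' (G : SimpleGraph V) [DecidableRel G.Adj] (a b : V) :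
    G.lapMatrix ℝ a b =
      (if a = b then (G.degree a : ℝ) else 0) - (if G.Adj a b then 1 else 0) := by
  rw [SimpleGraph.lapMatrix, Matrix.sub_apply, SimpleGraph.degMatrix, Matrix.diagonal_apply,
    SimpleGraph.adjMatrix_apply]

lemma dist_adj_le (G : SimpleGraph V) {x v w : V} (h : G.Adj v w) :
    G.dist x w ≤ G.dist x v + 1 := by
  by_cases hr : G.Reachable x w
  · have hrv : G.Reachable x v := hr.trans h.symm.reachable
    obtain ⟨p, hp⟩ := hrv.exists_walk_length_eq_dist
    have := SimpleGraph.dist_le (p.concat h)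
    rwa [SimpleGraph.Walk.length_concat, hp] at this
  · rw [SimpleGraph.dist_eq_zero_of_not_reachable hr]
    exact Nat.zero_le _

omit [DecidableEq V] in
lemma degree_induce (G : SimpleGraph V) [DecidableRel G.Adj] (S : Set V) [Fintype S]
    [DecidableRel (G.induce S).Adj] (v : V) (hv : v ∈ S) (h : ∀ w, G.Adj v w → w ∈ S) :
    (G.induce S).degree ⟨v, hv⟩ = G.degree v := by
  rw [← SimpleGraph.card_neighborSet_eq_degree, ← SimpleGraph.card_neighborSet_eq_degree]
  apply Fintype.card_congr
  refine ⟨fun w => ⟨(w : S), w.2⟩, fun u => ⟨⟨(u : V), h u u.2⟩, u.2⟩, ?_, ?_⟩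
  · intro w; rfl
  · intro u; rfl

end Aux

section IsoTransport

variable {V W : Type*} [Fintype V] [DecidableEq V] [Fintype W] [DecidableEq W]

lemma lap_map (G : SimpleGraph V) [DecidableRel G.Adj] (H : SimpleGraph W) [DecidableRel H.Adj]
    (e : G ≃g H) (a b : V) : G.lapMatrix ℝ a b = H.lapMatrix ℝ (e a) (e b) := by
  rw [lap_apply', lap_apply']
  have hdeg : G.degree a = H.degree (e a) := by
    rw [← SimpleGraph.card_neighborSet_eq_degree, ← SimpleGraph.card_neighborSet_eq_degree]
    exact Fintype.card_congr (e.mapNeighborSet a)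
  have hadj : G.Adj a b ↔ H.Adj (e a) (e b) := e.map_adj_iff.symm
  have heq : a = b ↔ e a = e b := (EquivLike.apply_eq_iff_eq e).symm
  rw [hdeg, if_congr heq rfl rfl, if_congr hadj rfl rfl]

lemma lap_pow_map (G : SimpleGraph V) [DecidableRel G.Adj] (H : SimpleGraph W)
    [DecidableRel H.Adj] (e : G ≃g H) (n : ℕ) (a b : V) :
    ((G.lapMatrix ℝ) ^ n) a b = ((H.lapMatrix ℝ) ^ n) (e a) (e b) := by
  have hM : G.lapMatrix ℝ = (H.lapMatrix ℝ).submatrix e e := by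
    ext a b; exact lap_map G H e a b
  have key : (G.lapMatrix ℝ) ^ n = ((H.lapMatrix ℝ) ^ n).submatrix e e := by
    induction n with
    | zero =>
        simp only [pow_zero]
        exact (Matrix.submatrix_one_equiv e.toEquiv).symm
    | succ k ih =>
        rw [pow_succ, pow_succ, ih, hM]
        exact Matrix.submatrix_mul_equiv ((H.lapMatrix ℝ) ^ k) (H.lapMatrix ℝ) _ e.toEquiv _
  rw [key, Matrix.submatrix_apply]

end IsoTransport

section Ball

variable {V : Type*} [Fintype V] [DecidableEq V]

lemma lap_pow_induce (G : SimpleGraph V) [DecidableRel G.Adj] (S : Set V) [Fintype S]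
    [DecidableRel (G.induce S).Adj] (f : V → ℕ) (n : ℕ)
    (hf : ∀ v w, G.Adj v w → f w ≤ f v + 1)
    (hSn : ∀ z, z ∈ S ↔ f z ≤ n)
    (x : V) (hx : x ∈ S) :
    ∀ k, ∀ v, ∀ hv : v ∈ S, f v + k ≤ n →
      ((G.lapMatrix ℝ) ^ k) v x = (((G.induce S).lapMatrix ℝ) ^ k) ⟨v, hv⟩ ⟨x, hx⟩ := by
  classical
  intro k
  induction k with
  | zero =>
      intro v hv _
      simp [Matrix.one_apply, Subtype.ext_iff]
  | succ k ih =>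
      intro v hv hvk
      rw [pow_succ', pow_succ', Matrix.mul_apply, Matrix.mul_apply]
      have hsub : ∀ w, G.Adj v w → w ∈ S := by
        intro w hw
        rw [hSn]
        have := hf v w hw
        have := (hSn v).mp hv
        omega
      -- termwise equality for w ∈ S, plus vanishing off S
      have hterm : ∀ w : V, ∀ hw : w ∈ S,
          G.lapMatrix ℝ v w * ((G.lapMatrix ℝ) ^ k) w x =
          (G.induce S).lapMatrix ℝ ⟨v, hv⟩ ⟨w, hw⟩ *
            (((G.induce S).lapMatrix ℝ) ^ k) ⟨w, hw⟩ ⟨x, hx⟩ := by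
        intro w hw
        by_cases hvw : v = w ∨ G.Adj v w
        · have hfw : f w + k ≤ n := by
            rcases hvw with h | h
            · subst h; omega
            · have := hf v w h; omega
          rw [ih w hw hfw]
          congr 1
          rw [lap_apply', lap_apply']
          by_cases hvw' : v = w
          · subst hvw'
            simp [degree_induce G S v hv hsub]
          · have h1 : ¬((⟨v, hv⟩ : S) = ⟨w, hw⟩) := by
              simpa [Subtype.ext_iff] using hvw'
            simp [hvw', h1]
        · push_neg at hvw
          have h1 : ¬((⟨v, hv⟩ : S) = ⟨w, hw⟩) := by
            simpa [Subtype.ext_iff] using hvw.1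
          rw [lap_apply', lap_apply']
          simp [hvw.1, hvw.2, h1]
      calc ∑ w : V, G.lapMatrix ℝ v w * ((G.lapMatrix ℝ) ^ k) w x
          = ∑ w ∈ Finset.univ.filter (· ∈ S),
              G.lapMatrix ℝ v w * ((G.lapMatrix ℝ) ^ k) w x := by
            refine (Finset.sum_filter_of_ne ?_).symm
            intro w _ hne
            by_contra hwS
            apply hne
            have hvw : ¬ (v = w) := fun h => hwS (h ▸ hv)
            have hadj : ¬ G.Adj v w := fun h => hwS (hsub w h)
            rw [lap_apply']
            simp [hvw, hadj]
        _ = ∑ w : S, G.lapMatrix ℝ v (w : V) * ((G.lapMatrix ℝ) ^ k) (w : V) x := by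
            exact Finset.sum_subtype _ (by simp) _
        _ = ∑ w : S, (G.induce S).lapMatrix ℝ ⟨v, hv⟩ w *
              (((G.induce S).lapMatrix ℝ) ^ k) w ⟨x, hx⟩ := by
            refine Finset.sum_congr rfl fun w _ => ?_
            exact hterm (w : V) w.2

end Ball

/-- The diagonal entry `(Δ_G^n) x x` of the `n`-th power of the Laplacian depends only on the
rooted isomorphism class of the ball of radius `n` around `x`: if `φ` is a graph isomorphism from
the ball `B_n(x)` in `G` onto the ball `B_n(y)` in `H` with `φ x = y`, then
`(Δ_G^n) x x = (Δ_H^n) y y`. -/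
theorem lapMatrix_pow_diag_eq_of_ball_iso
    {V W : Type*} [Fintype V] [DecidableEq V] [Fintype W] [DecidableEq W]
    (G : SimpleGraph V) [DecidableRel G.Adj] (H : SimpleGraph W) [DecidableRel H.Adj]
    (n : ℕ) (x : V) (y : W)
    (hx : x ∈ {z | G.dist x z ≤ n}) (hy : y ∈ {z | H.dist y z ≤ n})
    (φ : G.induce {z | G.dist x z ≤ n} ≃g H.induce {z | H.dist y z ≤ n})
    (hroot : φ ⟨x, hx⟩ = ⟨y, hy⟩) :
    ((G.lapMatrix ℝ) ^ n) x x = ((H.lapMatrix ℝ) ^ n) y y := by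
  haveI : Fintype ↥{z | G.dist x z ≤ n} := Fintype.ofFinite _
  haveI : Fintype ↥{z | H.dist y z ≤ n} := Fintype.ofFinite _
  haveI : DecidableRel (G.induce {z | G.dist x z ≤ n}).Adj := Classical.decRel _
  haveI : DecidableRel (H.induce {z | H.dist y z ≤ n}).Adj := Classical.decRel _
  have hG := lap_pow_induce G {z | G.dist x z ≤ n} (G.dist x) n
    (fun v w h => dist_adj_le G h) (fun z => Iff.rfl) x hx n x hx
    (by simp [SimpleGraph.dist_self])
  have hH := lap_pow_induce H {z | H.dist y z ≤ n} (H.dist y) n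
    (fun v w h => dist_adj_le H h) (fun z => Iff.rfl) y hy n y hy
    (by simp [SimpleGraph.dist_self])
  rw [hG, hH, lap_pow_map _ _ φ n, hroot]
end

section
/- Let G be a finite simple graph with maximum degree at most d, let ε > 0 and k ∈ ℕ. Let H(G,ε,k) be the set of vertices covered by some connected spanned subgraph A with |V(A)| ≤ k and |∂A|/|V(A)| ≤ ε, and let m(G,ε,k) be the maximum cardinality of a family of pairwise disjoint such subgraphs. Then there is a constant c(ε,d,k) > 0, independent of G, such that m(G,ε,k) ≥ c(ε,d,k) · |H(G,ε,k)|. -/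
/-- The inner vertex boundary of a set of vertices `A`: vertices of `A` with a neighbor
outside `A`. -/
def SimpleGraph.innerBoundary {V : Type*} (G : SimpleGraph V) (A : Set V) : Set V :=
  {x ∈ A | ∃ y ∉ A, G.Adj x y}

/-- `A` is a connected spanned subgraph with at most `k` vertices and relative inner boundary
at most `ε`. -/
def SimpleGraph.SmallBoundary {V : Type*} (G : SimpleGraph V) (ε : ℝ) (k : ℕ)
    (A : Finset V) : Prop :=
  (G.induce (A : Set V)).Connected ∧ A.card ≤ k ∧
    (Set.ncard (G.innerBoundary (A : Set V)) : ℝ) ≤ ε * A.card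

/-- The set `H(G,ε,k)` of vertices covered by some connected spanned subgraph `A` with
`|V(A)| ≤ k` and `|∂A|/|V(A)| ≤ ε`. -/
def SimpleGraph.coveredVertices {V : Type*} (G : SimpleGraph V) (ε : ℝ) (k : ℕ) : Set V :=
  {v | ∃ A : Finset V, G.SmallBoundary ε k A ∧ v ∈ A}

/-- `m(G,ε,k)`: the maximum cardinality of a family of pairwise disjoint connected spanned
subgraphs `A` with `|V(A)| ≤ k` and `|∂A|/|V(A)| ≤ ε`. -/
noncomputable def SimpleGraph.maxDisjointSmall {V : Type*} (G : SimpleGraph V) (ε : ℝ)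
    (k : ℕ) : ℕ :=
  sSup {n : ℕ | ∃ F : Finset (Finset V), F.card = n ∧ (∀ A ∈ F, G.SmallBoundary ε k A) ∧
    (F : Set (Finset V)).Pairwise (fun A B => Disjoint A B)}

section Aux

variable {V : Type} [Fintype V] [DecidableEq V] (G : SimpleGraph V) [DecidableRel G.Adj]

/-- Ball of radius `r` around `w`. -/
def gball (w : V) : ℕ → Finset V
  | 0 => {w}
  | r+1 => (gball w r).biUnion (fun u => insert u (G.neighborFinset u))

lemma self_mem_gball (w : V) (r : ℕ) : w ∈ gball G w r := by
  induction r with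
  | zero => simp [gball]
  | succ r ih => exact Finset.mem_biUnion.2 ⟨w, ih, Finset.mem_insert_self _ _⟩

lemma gball_adj_subset {w u : V} (h : G.Adj w u) (r : ℕ) :
    gball G u r ⊆ gball G w (r+1) := by
  induction r with
  | zero =>
    intro x hx
    simp only [gball, Finset.mem_singleton] at hx
    subst hx
    exact Finset.mem_biUnion.2 ⟨w, self_mem_gball G w 0,
      Finset.mem_insert_of_mem (by simpa using h)⟩
  | succ r ih =>
    intro x hx
    obtain ⟨y, hy, hxy⟩ := Finset.mem_biUnion.1 hx
    exact Finset.mem_biUnion.2 ⟨y, ih hy, hxy⟩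

lemma card_gball_le {d : ℕ} (hd : ∀ v, G.degree v ≤ d) (w : V) (r : ℕ) :
    (gball G w r).card ≤ (d+1)^r := by
  induction r with
  | zero => simp [gball]
  | succ r ih =>
    calc (gball G w (r+1)).card
        ≤ ∑ u ∈ gball G w r, (insert u (G.neighborFinset u)).card :=
          Finset.card_biUnion_le
      _ ≤ ∑ u ∈ gball G w r, (d+1) := by
          refine Finset.sum_le_sum fun u _ => ?_
          calc (insert u (G.neighborFinset u)).card ≤ (G.neighborFinset u).card + 1 :=
                Finset.card_insert_le _ _
            _ ≤ d + 1 := by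
                have := hd u
                rw [← SimpleGraph.card_neighborFinset_eq_degree] at this
                omega
      _ = (gball G w r).card * (d+1) := by rw [Finset.sum_const, smul_eq_mul]
      _ ≤ (d+1)^r * (d+1) := Nat.mul_le_mul_right _ ih
      _ = (d+1)^(r+1) := by ring

lemma mem_gball_of_walk {w v : V} (p : G.Walk w v) (r : ℕ) (hr : p.length ≤ r) :
    v ∈ gball G w r := by
  induction p generalizing r with
  | nil => exact self_mem_gball G _ r
  | @cons a b c h q ih =>
    cases r with
    | zero => simp [SimpleGraph.Walk.length_cons] at hr
    | succ r =>
      refine gball_adj_subset G h r (ih r ?_)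
      simp only [SimpleGraph.Walk.length_cons] at hr
      omega

end Aux

/-- There is a constant `c(ε,d,k) > 0`, independent of the graph, such that
`m(G,ε,k) ≥ c(ε,d,k) · |H(G,ε,k)|` for every finite graph `G` with degree bound `d`. -/
theorem maxDisjointSmall_ge_const_mul_coveredVertices (ε : ℝ) (hε : 0 < ε) (d k : ℕ) :
    ∃ c : ℝ, 0 < c ∧ ∀ (V : Type) [Fintype V] [DecidableEq V] (G : SimpleGraph V)
      [DecidableRel G.Adj], (∀ v, G.degree v ≤ d) →
      c * (Set.ncard (G.coveredVertices ε k) : ℝ) ≤ (G.maxDisjointSmall ε k : ℝ) := by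
  classical
  set K : ℕ := k * (d+1)^k + 1 with hKdef
  have hKpos : 0 < K := Nat.succ_pos _
  refine ⟨(K : ℝ)⁻¹, by positivity, ?_⟩
  intro V _ _ G _ hdeg
  set S := {n : ℕ | ∃ F : Finset (Finset V), F.card = n ∧ (∀ A ∈ F, G.SmallBoundary ε k A) ∧
    (F : Set (Finset V)).Pairwise (fun A B => Disjoint A B)} with hSdef
  have h0 : 0 ∈ S := ⟨∅, by simp⟩
  have hbdd : BddAbove S := by
    refine ⟨Fintype.card (Finset V), fun n hn => ?_⟩
    obtain ⟨F, hF, -⟩ := hn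
    exact hF ▸ Finset.card_le_univ F
  have hmS : G.maxDisjointSmall ε k ∈ S := Nat.sSup_mem ⟨0, h0⟩ hbdd
  obtain ⟨F, hFcard, hFsb, hFdisj⟩ := hmS
  -- maximality of F
  have hmax : ∀ B : Finset V, G.SmallBoundary ε k B → ∃ A ∈ F, ¬ Disjoint A B := by
    intro B hB
    by_contra hcon
    push_neg at hcon
    have hBne : B.Nonempty := by
      obtain ⟨⟨x, hx⟩⟩ := hB.1.nonempty
      exact ⟨x, hx⟩
    have hBF : B ∉ F := by
      intro h
      have := hcon B h
      rw [disjoint_self] at this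
      exact hBne.ne_empty (by simpa using this)
    have hmem : F.card + 1 ∈ S := by
      refine ⟨insert B F, ?_, ?_, ?_⟩
      · rw [Finset.card_insert_of_notMem hBF]
      · intro A hA
        rcases Finset.mem_insert.1 hA with h | h
        · exact h ▸ hB
        · exact hFsb A h
      · rw [Finset.coe_insert]
        refine Set.Pairwise.insert hFdisj ?_
        intro A hA hne
        exact ⟨(hcon A hA).symm, hcon A hA⟩
    have hle : F.card + 1 ≤ sSup S := le_csSup hbdd hmem
    have : sSup S = F.card := by rw [hFcard]; rfl
    omega
  -- covering
  set T : Finset V := F.biUnion (fun A => A.biUnion (fun w => gball G w k)) with hTdef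
  have hHT : G.coveredVertices ε k ⊆ ↑T := by
    intro v hv
    obtain ⟨B, hB, hvB⟩ := hv
    obtain ⟨A, hAF, hAB⟩ := hmax B hB
    obtain ⟨w, hwA, hwB⟩ := Finset.not_disjoint_iff.1 hAB
    have hconn := hB.1
    obtain ⟨p⟩ := hconn ⟨w, hwB⟩ ⟨v, hvB⟩
    have hcardB : Fintype.card ↥(B : Set V) = B.card := by
      simp
    have hlen : p.toPath.1.length < k := by
      have h1 := p.toPath.2.length_lt
      rw [hcardB] at h1
      exact lt_of_lt_of_le h1 hB.2.1
    -- map walk down to G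
    let ψ : G.induce (B : Set V) →g G :=
      ⟨Subtype.val, fun {a b} hab => hab⟩
    have hq : (p.toPath.1.map ψ).length ≤ k := by
      rw [SimpleGraph.Walk.length_map]
      omega
    have hvball : v ∈ gball G w k := mem_gball_of_walk G (p.toPath.1.map ψ) k hq
    exact Finset.mem_coe.2 (Finset.mem_biUnion.2 ⟨A, hAF,
      Finset.mem_biUnion.2 ⟨w, hwA, hvball⟩⟩)
  -- counting
  have hTcard : T.card ≤ F.card * K := by
    calc T.card ≤ ∑ A ∈ F, (A.biUnion fun w => gball G w k).card :=
          Finset.card_biUnion_le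
      _ ≤ ∑ A ∈ F, ∑ w ∈ A, (gball G w k).card :=
          Finset.sum_le_sum fun A _ => Finset.card_biUnion_le
      _ ≤ ∑ A ∈ F, ∑ _w ∈ A, (d+1)^k :=
          Finset.sum_le_sum fun A _ => Finset.sum_le_sum fun w _ => card_gball_le G hdeg w k
      _ = ∑ A ∈ F, A.card * (d+1)^k := by simp [Finset.sum_const, smul_eq_mul]
      _ ≤ ∑ _A ∈ F, K := by
          refine Finset.sum_le_sum fun A hA => ?_
          have := (hFsb A hA).2.1
          have : A.card * (d+1)^k ≤ k * (d+1)^k := Nat.mul_le_mul_right _ this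
          omega
      _ = F.card * K := by rw [Finset.sum_const, smul_eq_mul]
  have hHcard : Set.ncard (G.coveredVertices ε k) ≤ G.maxDisjointSmall ε k * K := by
    calc Set.ncard (G.coveredVertices ε k) ≤ Set.ncard (↑T : Set V) :=
          Set.ncard_le_ncard hHT (Finset.finite_toSet T)
      _ = T.card := Set.ncard_coe_finset T
      _ ≤ F.card * K := hTcard
      _ = G.maxDisjointSmall ε k * K := by rw [hFcard]
  have hHcardR : (Set.ncard (G.coveredVertices ε k) : ℝ) ≤
      (G.maxDisjointSmall ε k : ℝ) * K := by exact_mod_cast hHcard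
  have hKR : (0:ℝ) < K := by exact_mod_cast hKpos
  rw [inv_mul_le_iff₀ hKR, mul_comm]
  exact hHcardR
end

section
/- Let G be an infinite connected graph with maximum degree at most d, and suppose every finite connected spanned subgraph A of G satisfies |∂A| ≥ ε·|V(A)|, i.e., the isoperimetric constant i(G) is at least ε. Then the bottom of the spectrum of the Laplacian Δ_G on ℓ²(V(G)) is bounded below by ε²/(2d), i.e., ⟨Δ_G f, f⟩ ≥ (ε²/(2d))·‖f‖² for all finitely supported f. -/
/-!
Co-area argument. For finitely supported `g ≥ 0` with support `B` and minimum `m` on it, peeling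
off the layer `m • 1_B` shows, by induction on the support, that `2ε ∑ g ≤ ∑ |g x - g y|` over
ordered adjacent pairs: every set `B` is crossed by at least `2|∂B| ≥ 2ε|B|` ordered edges, the
isoperimetric bound passing from connected sets to all finite sets by splitting off components.
Applied to `g = f²`, with `|f x² - f y²| = |f x - f y| |f x + f y|` and Cauchy–Schwarz, this gives
`(2ε‖f‖²)² ≤ 2⟨Δf, f⟩ · 4d‖f‖²`.
-/

open Finset

theorem sq_div_mul_le_of_sq_mul_le {a b N Q : ℝ} (hb : 0 ≤ b) (hN : 0 ≤ N) (hQ : 0 ≤ Q)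
    (h : (a * N) ^ 2 ≤ b * Q * N) : a ^ 2 / b * N ≤ Q := by
  rcases hN.eq_or_lt with rfl | hN
  · simpa using hQ
  rcases hb.eq_or_lt with rfl | hb
  · simpa using hQ
  rw [div_mul_eq_mul_div, div_le_iff₀ hb]
  nlinarith

theorem sq_sum_abs_sq_sub_sq_le {ι : Type*} (s : Finset ι) (u v : ι → ℝ) :
    (∑ i ∈ s, |u i ^ 2 - v i ^ 2|) ^ 2 ≤
      (∑ i ∈ s, (u i - v i) ^ 2) * ∑ i ∈ s, (u i + v i) ^ 2 := by
  have h := sum_mul_sq_le_sq_mul_sq s (fun i => |u i - v i|) (fun i => |u i + v i|)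
  simpa only [sq_abs, ← abs_mul, mul_comm (u _ - v _), ← sq_sub_sq] using h

theorem abs_sub_add_ite_mem {α : Type*} [DecidableEq α] {B : Finset α} {u : α → ℝ}
    (hu : ∀ x, 0 ≤ u x) (huB : ∀ x ∉ B, u x = 0) {m : ℝ} (hm : 0 ≤ m) (x y : α) :
    |(u x + if x ∈ B then m else 0) - (u y + if y ∈ B then m else 0)| =
      |u x - u y| + if Xor (x ∈ B) (y ∈ B) then m else 0 := by
  by_cases hx : x ∈ B <;> by_cases hy : y ∈ B
  · simp [hx, hy, Xor]
  · simp [hx, hy, Xor, huB y hy, abs_of_nonneg (hu x), abs_of_nonneg (add_nonneg (hu x) hm)]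
  · simp only [hx, hy, huB x hx, if_false, if_true]
    rw [abs_of_nonpos (by linarith [hu y]), abs_of_nonpos (by linarith [hu y])]
    simp [Xor]
  · simp [hx, hy, Xor]

theorem sum_abs_sub_add_ite_mem {α : Type*} [DecidableEq α] (D : Finset (α × α)) {B : Finset α}
    {u : α → ℝ} (hu : ∀ x, 0 ≤ u x) (huB : ∀ x ∉ B, u x = 0) {m : ℝ} (hm : 0 ≤ m) :
    ∑ p ∈ D, |(u p.1 + if p.1 ∈ B then m else 0) - (u p.2 + if p.2 ∈ B then m else 0)| =
      ∑ p ∈ D, |u p.1 - u p.2| + m * #{p ∈ D | Xor (p.1 ∈ B) (p.2 ∈ B)} := by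
  rw [card_eq_sum_ones, sum_filter, Nat.cast_sum, mul_sum, ← sum_add_distrib]
  refine sum_congr rfl fun p _ => ?_
  rw [abs_sub_add_ite_mem hu huB hm]
  split_ifs <;> simp

theorem mul_sum_le_sum_abs_sub_of_le_card_crossing {α : Type*} [DecidableEq α]
    (D : Finset (α × α)) (c : ℝ) (A : Finset α)
    (hcut : ∀ B ⊆ A, B.Nonempty → c * #B ≤ #{p ∈ D | Xor (p.1 ∈ B) (p.2 ∈ B)})
    (g : α → ℝ) (hg : ∀ x, 0 ≤ g x) (hgA : ∀ x ∉ A, g x = 0) :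
    c * ∑ x ∈ A, g x ≤ ∑ p ∈ D, |g p.1 - g p.2| := by
  induction A using Finset.strongInduction generalizing g with
  | H A ih =>
  set B := {x ∈ A | g x ≠ 0}
  have hgB : ∀ x ∉ B, g x = 0 := fun x hx => by
    by_contra h
    exact hx (mem_filter.2 ⟨by_contra fun hA => h (hgA x hA), h⟩)
  rcases B.eq_empty_or_nonempty with hB | hB
  · rw [sum_eq_zero fun x _ => hgB x (hB ▸ notMem_empty x), mul_zero]
    exact sum_nonneg fun _ _ => abs_nonneg _
  obtain ⟨x₀, hx₀, hm⟩ := B.exists_mem_eq_inf' hB g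
  set m := B.inf' hB g
  have hm_pos : 0 < m := hm ▸ (hg x₀).lt_of_ne' (mem_filter.1 hx₀).2
  set g' : α → ℝ := fun x => g x - if x ∈ B then m else 0
  have hg_eq : ∀ x, g x = g' x + if x ∈ B then m else 0 := fun x => by ring
  have hg' : ∀ x, 0 ≤ g' x := fun x => by
    by_cases hx : x ∈ B
    · simpa [g', hx] using B.inf'_le g hx
    · simpa [g', hx] using hg x
  have hg'B : ∀ x ∉ B.erase x₀, g' x = 0 := fun x hx => by
    rcases eq_or_ne x x₀ with rfl | hne
    · simp [g', hx₀, hm]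
    · have hxB : x ∉ B := fun h => hx (mem_erase.2 ⟨hne, h⟩)
      simp [g', hgB x hxB, hxB]
  have hBA : B ⊆ A := filter_subset _ _
  have ih' := ih (B.erase x₀) ((erase_ssubset hx₀).trans_subset hBA)
    (fun C hC => hcut C (hC.trans ((erase_subset _ _).trans hBA))) g' hg' hg'B
  have hsum : ∑ x ∈ A, g x = ∑ x ∈ B.erase x₀, g' x + m * #B := by
    rw [sum_congr rfl fun x _ => hg_eq x, sum_add_distrib, sum_ite_mem, inter_eq_right.2 hBA,
      sum_const, nsmul_eq_mul, mul_comm,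
      sum_subset ((erase_subset _ _).trans hBA) fun x _ hx => hg'B x hx]
  have hsum_abs := sum_abs_sub_add_ite_mem D hg'
    (fun x hx => hg'B x fun h => hx (mem_of_mem_erase h)) hm_pos.le
  simp only [← hg_eq] at hsum_abs
  have hcutB := hcut B hBA hB
  rw [hsum, hsum_abs, mul_add]
  nlinarith

namespace SimpleGraph

variable {V : Type*} (G : SimpleGraph V)

def vertexBoundary (A : Finset V) : Set V := {x | x ∈ A ∧ ∃ y ∉ A, G.Adj x y}

theorem vertexBoundary_subset (A : Finset V) : G.vertexBoundary A ⊆ A := fun _ hx => hx.1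

theorem vertexBoundary_finite (A : Finset V) : (G.vertexBoundary A).Finite :=
  A.finite_toSet.subset (G.vertexBoundary_subset A)

theorem vertexBoundary_union_of_forall_not_adj {B C : Finset V} [DecidableEq V]
    (h : ∀ x ∈ B, ∀ y ∈ C, ¬G.Adj x y) :
    G.vertexBoundary (B ∪ C) = G.vertexBoundary B ∪ G.vertexBoundary C := by
  ext x
  simp only [vertexBoundary, Set.mem_union, Set.mem_ofPred_eq, mem_union, not_or]
  constructor
  · rintro ⟨hx | hx, y, ⟨hyB, hyC⟩, hxy⟩
    · exact .inl ⟨hx, y, hyB, hxy⟩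
    · exact .inr ⟨hx, y, hyC, hxy⟩
  · rintro (⟨hx, y, hy, hxy⟩ | ⟨hx, y, hy, hxy⟩)
    · exact ⟨.inl hx, y, ⟨hy, fun hyC => h x hx y hyC hxy⟩, hxy⟩
    · exact ⟨.inr hx, y, ⟨fun hyB => h y hyB x hx hxy.symm, hy⟩, hxy⟩

theorem exists_split_of_not_connected_induce [DecidableEq V] {A : Finset V} (hA : A.Nonempty)
    (hc : ¬(G.induce (A : Set V)).Connected) :
    ∃ B ⊆ A, B.Nonempty ∧ (A \ B).Nonempty ∧ ∀ x ∈ B, ∀ y ∈ A \ B, ¬G.Adj x y := by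
  classical
  have : ¬(G.induce (A : Set V)).Preconnected := fun h => hc ((connected_iff _).2 ⟨h, hA.coe_sort⟩)
  obtain ⟨u, v, huv⟩ : ∃ u v, ¬(G.induce (A : Set V)).Reachable u v := by
    simpa [Preconnected] using this
  set B := {x ∈ A | ∃ hx : x ∈ A, (G.induce (A : Set V)).Reachable u ⟨x, hx⟩}
  refine ⟨B, filter_subset _ _, ⟨u, mem_filter.2 ⟨u.2, u.2, .rfl⟩⟩,
    ⟨v, mem_sdiff.2 ⟨v.2, fun hv => huv ?_⟩⟩, fun x hx y hy hxy => (mem_sdiff.1 hy).2 ?_⟩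
  · obtain ⟨-, _, h⟩ := mem_filter.1 hv
    exact h
  · obtain ⟨hxA, _, h⟩ := mem_filter.1 hx
    have hyA := (mem_sdiff.1 hy).1
    exact mem_filter.2 ⟨hyA, hyA, h.trans (Adj.reachable (G := G.induce (A : Set V))
      (u := ⟨x, hxA⟩) (v := ⟨y, hyA⟩) hxy)⟩

theorem le_ncard_vertexBoundary_of_forall_connected {ε : ℝ}
    (hiso : ∀ A : Finset V, A.Nonempty → (G.induce (A : Set V)).Connected →
      ε * #A ≤ (G.vertexBoundary A).ncard)
    (A : Finset V) (hA : A.Nonempty) : ε * #A ≤ (G.vertexBoundary A).ncard := by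
  classical
  induction A using Finset.strongInduction with
  | H A ih =>
  by_cases hc : (G.induce (A : Set V)).Connected
  · exact hiso A hA hc
  obtain ⟨B, hBA, hB, hAB, hsep⟩ := G.exists_split_of_not_connected_induce hA hc
  have hdisj : Disjoint (G.vertexBoundary B) (G.vertexBoundary (A \ B)) :=
    (disjoint_coe.2 disjoint_sdiff).mono (G.vertexBoundary_subset B) (G.vertexBoundary_subset _)
  calc ε * #A = ε * #B + ε * #(A \ B) := by
        rw [← mul_add, ← Nat.cast_add, add_comm, card_sdiff_add_card_eq_card hBA]
    _ ≤ (G.vertexBoundary B).ncard + (G.vertexBoundary (A \ B)).ncard :=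
        add_le_add (ih B (hBA.ssubset_of_not_subset (sdiff_nonempty.1 hAB)) hB)
          (ih _ (sdiff_ssubset hBA hB) hAB)
    _ = (G.vertexBoundary A).ncard := by
        rw [← Nat.cast_add, ← Set.ncard_union_eq hdisj (G.vertexBoundary_finite B)
          (G.vertexBoundary_finite _),
          ← G.vertexBoundary_union_of_forall_not_adj hsep, union_sdiff_of_subset hBA]

section Darts

variable [DecidableEq V] [DecidableRel G.Adj] [G.LocallyFinite]

def dartsMeeting (S : Finset V) : Finset (V × V) :=
  {p ∈ (S ∪ S.biUnion (G.neighborFinset ·)) ×ˢ (S ∪ S.biUnion (G.neighborFinset ·)) |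
    G.Adj p.1 p.2 ∧ (p.1 ∈ S ∨ p.2 ∈ S)}

variable {S : Finset V}

@[simp]
theorem mem_dartsMeeting {p : V × V} :
    p ∈ G.dartsMeeting S ↔ G.Adj p.1 p.2 ∧ (p.1 ∈ S ∨ p.2 ∈ S) := by
  have hT : ∀ {x y}, x ∈ S → G.Adj x y → y ∈ S ∪ S.biUnion (G.neighborFinset ·) := fun hx hxy =>
    mem_union_right _ (mem_biUnion.2 ⟨_, hx, (mem_neighborFinset _ _ _).2 hxy⟩)
  simp only [dartsMeeting, mem_filter, mem_product, and_iff_right_iff_imp]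
  rintro ⟨hadj, h | h⟩
  · exact ⟨mem_union_left _ h, hT h hadj⟩
  · exact ⟨hT h hadj.symm, mem_union_left _ h⟩

theorem sum_dartsMeeting_swap {M : Type*} [AddCommMonoid M] (h : V × V → M) :
    ∑ p ∈ G.dartsMeeting S, h p.swap = ∑ p ∈ G.dartsMeeting S, h p :=
  sum_equiv (Equiv.prodComm V V) (fun p => by simp [G.adj_comm, or_comm]) fun _ _ => rfl

theorem sum_dartsMeeting_of_fst_notMem {M : Type*} [AddCommMonoid M] (h : V × V → M)
    (hS : ∀ p : V × V, p.1 ∉ S → h p = 0) :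
    ∑ p ∈ G.dartsMeeting S, h p = ∑ x ∈ S, ∑ y ∈ G.neighborFinset x, h (x, y) := by
  rw [← sum_filter_of_ne (p := fun p => p.1 ∈ S) fun p _ hp => by_contra fun h' => hp (hS p h')]
  exact sum_finset_product _ _ _ fun p => by simp [mem_neighborFinset]; tauto

theorem sum_dartsMeeting_sq_sub {f : V → ℝ} (hf : ∀ x ∉ S, f x = 0) :
    ∑ p ∈ G.dartsMeeting S, (f p.1 - f p.2) ^ 2 =
      2 * ∑ x ∈ S, ((G.degree x : ℝ) * f x - ∑ y ∈ G.neighborFinset x, f y) * f x := by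
  have hfst : ∑ p ∈ G.dartsMeeting S, (f p.1 - f p.2) * f p.1 =
      ∑ x ∈ S, ((G.degree x : ℝ) * f x - ∑ y ∈ G.neighborFinset x, f y) * f x := by
    rw [G.sum_dartsMeeting_of_fst_notMem _ fun p hp => by simp [hf _ hp]]
    refine sum_congr rfl fun x _ => ?_
    dsimp only
    rw [← sum_mul, sum_sub_distrib, sum_const, card_neighborFinset_eq_degree, nsmul_eq_mul]
  calc ∑ p ∈ G.dartsMeeting S, (f p.1 - f p.2) ^ 2
      = ∑ p ∈ G.dartsMeeting S, (f p.1 - f p.2) * f p.1 +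
          ∑ p ∈ G.dartsMeeting S, (f p.swap.1 - f p.swap.2) * f p.swap.1 := by
        rw [← sum_add_distrib]
        exact sum_congr rfl fun p _ => by simp only [Prod.fst_swap, Prod.snd_swap]; ring
    _ = _ := by rw [G.sum_dartsMeeting_swap fun p => (f p.1 - f p.2) * f p.1, hfst]; ring

theorem sum_dartsMeeting_sq_fst {f : V → ℝ} (hf : ∀ x ∉ S, f x = 0) :
    ∑ p ∈ G.dartsMeeting S, f p.1 ^ 2 = ∑ x ∈ S, (G.degree x : ℝ) * f x ^ 2 := by
  rw [G.sum_dartsMeeting_of_fst_notMem _ fun p hp => by simp [hf _ hp]]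
  simp [card_neighborFinset_eq_degree]

theorem sum_dartsMeeting_sq_add_le {f : V → ℝ} (hf : ∀ x ∉ S, f x = 0) {d : ℕ}
    (hdeg : ∀ x ∈ S, G.degree x ≤ d) :
    ∑ p ∈ G.dartsMeeting S, (f p.1 + f p.2) ^ 2 ≤ 4 * d * ∑ x ∈ S, f x ^ 2 := calc
  _ ≤ ∑ p ∈ G.dartsMeeting S, 2 * (f p.1 ^ 2 + f p.swap.1 ^ 2) := sum_le_sum fun _ _ => add_sq_le
  _ = 4 * ∑ x ∈ S, (G.degree x : ℝ) * f x ^ 2 := by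
    rw [← mul_sum, sum_add_distrib, G.sum_dartsMeeting_swap fun p => f p.1 ^ 2,
      G.sum_dartsMeeting_sq_fst hf]
    ring
  _ ≤ 4 * ∑ x ∈ S, (d : ℝ) * f x ^ 2 := by
    gcongr with x hx
    exact_mod_cast hdeg x hx
  _ = 4 * d * ∑ x ∈ S, f x ^ 2 := by rw [← mul_sum, mul_assoc]

theorem two_mul_ncard_vertexBoundary_le_card_crossing {B : Finset V} (hB : B ⊆ S) :
    2 * (G.vertexBoundary B).ncard ≤ #{p ∈ G.dartsMeeting S | Xor (p.1 ∈ B) (p.2 ∈ B)} := by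
  set L := {p ∈ G.dartsMeeting S | p.1 ∈ B ∧ p.2 ∉ B}
  set E := {p ∈ G.dartsMeeting S | p.2 ∈ B ∧ p.1 ∉ B}
  have hL : (G.vertexBoundary B).ncard ≤ #L := by
    refine (Set.ncard_le_ncard (t := (L.image Prod.fst : Set V)) ?_).trans
      ((Set.ncard_coe_finset _).trans_le card_image_le)
    rintro x ⟨hx, y, hy, hxy⟩
    exact mem_image.2 ⟨(x, y), by simp [L, hx, hy, hxy, hB hx], rfl⟩
  have hE : (G.vertexBoundary B).ncard ≤ #E := by
    refine (Set.ncard_le_ncard (t := (E.image Prod.snd : Set V)) ?_).trans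
      ((Set.ncard_coe_finset _).trans_le card_image_le)
    rintro x ⟨hx, y, hy, hxy⟩
    exact mem_image.2 ⟨(y, x), by simp [E, hx, hy, hxy.symm, hB hx], rfl⟩
  have hcard : #{p ∈ G.dartsMeeting S | Xor (p.1 ∈ B) (p.2 ∈ B)} = #L + #E := by
    rw [← card_union_of_disjoint (disjoint_filter.2 fun _ _ h₁ h₂ => h₁.2 h₂.1), ← filter_or]
    congr! 2
  omega

theorem two_mul_mul_sum_le_sum_dartsMeeting_abs_sub {ε : ℝ}
    (hiso : ∀ A : Finset V, A.Nonempty → ε * #A ≤ (G.vertexBoundary A).ncard)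
    {g : V → ℝ} (hg : ∀ x, 0 ≤ g x) (hgS : ∀ x ∉ S, g x = 0) :
    2 * ε * ∑ x ∈ S, g x ≤ ∑ p ∈ G.dartsMeeting S, |g p.1 - g p.2| := by
  refine mul_sum_le_sum_abs_sub_of_le_card_crossing _ _ S (fun B hB hBne => ?_) g hg hgS
  calc 2 * ε * #B = 2 * (ε * #B) := by ring
    _ ≤ 2 * (G.vertexBoundary B).ncard := by gcongr; exact hiso B hBne
    _ ≤ _ := by exact_mod_cast G.two_mul_ncard_vertexBoundary_le_card_crossing hB

end Darts

end SimpleGraph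

theorem infinite_cheeger_inequality_general {V : Type*}
    (G : SimpleGraph V) [G.LocallyFinite]
    (d : ℕ) (hdeg : ∀ v, G.degree v ≤ d) (ε : ℝ) (hε : 0 < ε)
    (hiso : ∀ A : Finset V, A.Nonempty → (G.induce (A : Set V)).Connected →
      ε * A.card ≤ (Set.ncard {x : V | x ∈ A ∧ ∃ y ∉ A, G.Adj x y} : ℝ))
    (f : V → ℝ) (hf : (Function.support f).Finite) :
    (ε ^ 2 / (2 * d)) * ∑ᶠ x, (f x) ^ 2 ≤
      ∑ᶠ x, ((G.degree x : ℝ) * f x - ∑ y ∈ G.neighborFinset x, f y) * f x := by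
  classical
  set S := hf.toFinset
  have hfS : ∀ x ∉ S, f x = 0 := fun x hx => by simpa [S] using hx
  rw [finsum_eq_sum_of_support_subset (s := S) _ (by rw [Function.support_pow _ two_ne_zero,
      hf.coe_toFinset]),
    finsum_eq_sum_of_support_subset (s := S) _
      ((Function.support_mul_subset_right _ f).trans hf.coe_toFinset.superset)]
  have hsub := G.sum_dartsMeeting_sq_sub hfS
  have hadd := G.sum_dartsMeeting_sq_add_le hfS fun x _ => hdeg x
  have hcoarea := G.two_mul_mul_sum_le_sum_dartsMeeting_abs_sub (S := S)
    (G.le_ncard_vertexBoundary_of_forall_connected hiso) (fun x => sq_nonneg (f x))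
    fun x hx => by simp [hfS x hx]
  have hQ : 0 ≤ 2 * ∑ x ∈ S, ((G.degree x : ℝ) * f x - ∑ y ∈ G.neighborFinset x, f y) * f x :=
    hsub ▸ sum_nonneg fun _ _ => sq_nonneg _
  refine sq_div_mul_le_of_sq_mul_le (by positivity) (sum_nonneg fun _ _ => sq_nonneg _)
    (by linarith) ?_
  have := calc (2 * ε * ∑ x ∈ S, f x ^ 2) ^ 2
      ≤ (∑ p ∈ G.dartsMeeting S, |f p.1 ^ 2 - f p.2 ^ 2|) ^ 2 := by gcongr
    _ ≤ (∑ p ∈ G.dartsMeeting S, (f p.1 - f p.2) ^ 2) *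
          ∑ p ∈ G.dartsMeeting S, (f p.1 + f p.2) ^ 2 := sq_sum_abs_sq_sub_sq_le _ _ _
    _ ≤ (2 * ∑ x ∈ S, ((G.degree x : ℝ) * f x - ∑ y ∈ G.neighborFinset x, f y) * f x) *
          (4 * d * ∑ x ∈ S, f x ^ 2) := by rw [hsub]; exact mul_le_mul_of_nonneg_left hadd hQ
  linarith

/-- Cheeger-type inequality for infinite graphs: if `G` is an infinite connected locally finite
graph with maximum degree at most `d` and every finite connected spanned subgraph `A` satisfies
`|∂A| ≥ ε|V(A)|`, then the quadratic form of the Laplacian satisfies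
`⟨Δ_G f, f⟩ ≥ (ε²/(2d)) ‖f‖²` for every finitely supported `f : V → ℝ`. -/
theorem infinite_cheeger_inequality {V : Type*} [Infinite V] [DecidableEq V]
    (G : SimpleGraph V) [DecidableRel G.Adj] [G.LocallyFinite] (hconn : G.Connected)
    (d : ℕ) (hd : 0 < d) (hdeg : ∀ v, G.degree v ≤ d) (ε : ℝ) (hε : 0 < ε)
    (hiso : ∀ A : Finset V, A.Nonempty → (G.induce (A : Set V)).Connected →
      ε * A.card ≤ (Set.ncard {x : V | x ∈ A ∧ ∃ y ∉ A, G.Adj x y} : ℝ))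
    (f : V → ℝ) (hf : (Function.support f).Finite) :
    (ε ^ 2 / (2 * d)) * ∑ᶠ x, (f x) ^ 2 ≤
      ∑ᶠ x, ((G.degree x : ℝ) * f x - ∑ y ∈ G.neighborFinset x, f y) * f x :=
  infinite_cheeger_inequality_general G d hdeg ε hε hiso f hf
end
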